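/- arXiv:2601.11941 — 4 statements merged into one kernel-verified Lean document; each statement's English description precedes it below -/
import Mathlib

section
/- Integral fluctuation theorem for the embedded chain: let S be a finite set with at least two elements, k : S × S → ℝ strictly positive on every ordered pair of distinct states, and π : S → ℝ strictly positive with ∑_j π(j) = 1 and stationary for k. Fix m ≥ 1. For a trajectory ω = (j₀, …, j_m) with consecutive states distinct, define the forward probability P_F(ω) = π(j₀)·∏_{i=0}^{m-1} k(j_i,j_{i+1})/λ(j_i), where λ(j) = ∑_{i≠j} k(j,i), and the entropy production Σ(ω) = ∑_{i=0}^{m-1} log( k(j_i,j_{i+1})·π(j_i) / ( k(j_{i+1},j_i)·π(j_{i+1}) ) ). Then the forward expectation of exp(−Σ) over all such trajectories equals one: ∑_ω P_F(ω)·exp(−Σ(ω)) = 1, where the sum is over all sequences (j₀,…,j_m) in S^{m+1} with j_{i+1} ≠ j_i for all i. -/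
open Finset

private lemma div_cancel_aux (a b c : ℝ) (ha : a ≠ 0) : a / b * (c / a) = c / b := by
  rw [div_mul_div_comm, mul_comm a c, mul_comm b a, ← div_div, mul_div_assoc,
    div_self ha, mul_one]

private lemma tele_fin : ∀ (n : ℕ) (g : Fin (n + 1) → ℝ), (∀ i, g i ≠ 0) →
    ∏ i : Fin n, g i.succ / g i.castSucc = g (Fin.last n) / g 0
  | 0, g, hg => by simp [Fin.last, div_self (hg 0)]
  | n + 1, g, hg => by
    rw [Fin.prod_univ_castSucc]
    have h := tele_fin n (fun i => g i.castSucc) (fun i => hg _)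
    have h1 : ∏ i : Fin n, g i.castSucc.succ / g i.castSucc.castSucc
        = ∏ i : Fin n, g i.succ.castSucc / g i.castSucc.castSucc := by
      apply Finset.prod_congr rfl; intro i _; rw [Fin.succ_castSucc]
    rw [h1, h, Fin.succ_last, Fin.castSucc_zero,
      div_cancel_aux _ _ _ (hg ((Fin.last n).castSucc))]

private lemma aux_sum {S : Type} [Fintype S] [DecidableEq S]
    (k : S → S → ℝ) (π : S → ℝ) (hπ1 : ∑ j, π j = 1)
    (lam : S → ℝ) (hlam0 : ∀ j, lam j ≠ 0)
    (hstat : ∀ j, ∑ i ∈ univ.erase j, π i * k i j = π j * lam j) :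
    ∀ n : ℕ, ∑ f : Fin (n + 1) → S,
      (if ∀ i : Fin n, f i.succ ≠ f i.castSucc then
        π (f (Fin.last n)) * ∏ i : Fin n, k (f i.succ) (f i.castSucc) / lam (f i.castSucc)
      else 0) = 1
  | 0 => by
    simp only [IsEmpty.forall_iff, if_true, Finset.univ_eq_empty, Finset.prod_empty, mul_one]
    rw [← hπ1]
    exact Fintype.sum_equiv (Equiv.funUnique (Fin 1) S) _ _ (fun f => rfl)
  | n + 1 => by
    have IH := aux_sum k π hπ1 lam hlam0 hstat n
    rw [← Fintype.sum_equiv (Fin.snocEquiv (fun _ : Fin (n + 2) => S))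
      (fun p : S × (Fin (n + 1) → S) =>
        if (∀ i : Fin n, p.2 i.succ ≠ p.2 i.castSucc) ∧ p.1 ≠ p.2 (Fin.last n) then
          (∏ i : Fin n, k (p.2 i.succ) (p.2 i.castSucc) / lam (p.2 i.castSucc))
            * (π p.1 * k p.1 (p.2 (Fin.last n)) / lam (p.2 (Fin.last n)))
        else 0) _ ?_]
    · rw [Fintype.sum_prod_type, Finset.sum_comm]
      rw [← IH]
      apply Finset.sum_congr rfl
      intro g _
      by_cases hA : ∀ i : Fin n, g i.succ ≠ g i.castSucc
      · rw [if_pos hA]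
        have hterm : ∀ j : S, (if (∀ i : Fin n, g i.succ ≠ g i.castSucc)
              ∧ j ≠ g (Fin.last n) then
            (∏ i : Fin n, k (g i.succ) (g i.castSucc) / lam (g i.castSucc))
              * (π j * k j (g (Fin.last n)) / lam (g (Fin.last n))) else 0)
            = (if j ≠ g (Fin.last n) then
            (π j * k j (g (Fin.last n))) *
              ((∏ i : Fin n, k (g i.succ) (g i.castSucc) / lam (g i.castSucc))
                / lam (g (Fin.last n))) else 0) := by
          intro j
          by_cases hj : j ≠ g (Fin.last n)
          · rw [if_pos ⟨hA, hj⟩, if_pos hj]; ring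
          · rw [if_neg (fun hc => hj hc.2), if_neg hj]
        rw [Finset.sum_congr rfl (fun j _ => hterm j), ← Finset.sum_filter,
          Finset.filter_ne', ← Finset.sum_mul, hstat (g (Fin.last n))]
        rw [mul_assoc, mul_comm (lam (g (Fin.last n))),
          div_mul_cancel₀ _ (hlam0 (g (Fin.last n)))]
      · rw [if_neg hA]
        have hz : ∀ j : S, (if (∀ i : Fin n, g i.succ ≠ g i.castSucc)
              ∧ j ≠ g (Fin.last n) then
            (∏ i : Fin n, k (g i.succ) (g i.castSucc) / lam (g i.castSucc))
              * (π j * k j (g (Fin.last n)) / lam (g (Fin.last n))) else 0) = 0 := by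
          intro j
          rw [if_neg (fun hc => hA hc.1)]
        rw [Finset.sum_congr rfl (fun j _ => hz j), Finset.sum_const_zero]
    · rintro ⟨j, g⟩
      simp only [Fin.snocEquiv_apply]
      have hcond : (∀ i : Fin (n + 1),
          Fin.snoc (α := fun _ => S) g j i.succ ≠ Fin.snoc (α := fun _ => S) g j i.castSucc)
          ↔ ((∀ i : Fin n, g i.succ ≠ g i.castSucc) ∧ j ≠ g (Fin.last n)) := by
        constructor
        · intro h
          constructor
          · intro i
            have := h i.castSucc
            rwa [Fin.succ_castSucc, Fin.snoc_castSucc, Fin.snoc_castSucc] at this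
          · have := h (Fin.last n)
            rwa [Fin.succ_last, Fin.snoc_last, Fin.snoc_castSucc] at this
        · rintro ⟨h1, h2⟩ i
          refine Fin.lastCases ?_ ?_ i
          · rwa [Fin.succ_last, Fin.snoc_last, Fin.snoc_castSucc]
          · intro i
            rw [Fin.succ_castSucc, Fin.snoc_castSucc, Fin.snoc_castSucc]
            exact h1 i
      by_cases h : (∀ i : Fin n, g i.succ ≠ g i.castSucc) ∧ j ≠ g (Fin.last n)
      · rw [if_pos h, if_pos (hcond.mpr h)]
        rw [Fin.prod_univ_castSucc]
        have hp : ∀ i : Fin n,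
            k (Fin.snoc (α := fun _ => S) g j i.castSucc.succ)
                (Fin.snoc (α := fun _ => S) g j i.castSucc.castSucc)
              / lam (Fin.snoc (α := fun _ => S) g j i.castSucc.castSucc)
            = k (g i.succ) (g i.castSucc) / lam (g i.castSucc) := by
          intro i
          rw [Fin.succ_castSucc, Fin.snoc_castSucc, Fin.snoc_castSucc]
        rw [Finset.prod_congr rfl (fun i _ => hp i)]
        rw [Fin.succ_last, Fin.snoc_last, Fin.snoc_castSucc]
        ring
      · rw [if_neg h, if_neg (fun hh => h (hcond.mp hh))]




open Finset in
/-- Integral fluctuation theorem for the embedded chain: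
over all length-`m` trajectories with consecutive states distinct, the forward
expectation of `exp(−Σ)` equals one, where `P_F(ω) = π(j₀) ∏ᵢ k(jᵢ,jᵢ₊₁)/λ(jᵢ)` and
`Σ(ω) = ∑ᵢ log( k(jᵢ,jᵢ₊₁)·π(jᵢ) / ( k(jᵢ₊₁,jᵢ)·π(jᵢ₊₁) ) )`. -/
theorem integral_fluctuation_theorem_embedded_chain
    {S : Type} [Fintype S] [DecidableEq S] (hS : 1 < Fintype.card S)
    (k : S → S → ℝ) (hk : ∀ i j, i ≠ j → 0 < k i j)
    (π : S → ℝ) (hπ : ∀ j, 0 < π j) (hπ1 : ∑ j, π j = 1)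
    (hstat : ∀ j, ∑ i ∈ univ.erase j, π i * k i j
      = π j * ∑ i ∈ univ.erase j, k j i)
    (m : ℕ) (hm : 1 ≤ m) :
    let lam : S → ℝ := fun j => ∑ i ∈ univ.erase j, k j i
    let PF : (Fin (m + 1) → S) → ℝ := fun f =>
      π (f 0) * ∏ i : Fin m, k (f i.castSucc) (f i.succ) / lam (f i.castSucc)
    let Sig : (Fin (m + 1) → S) → ℝ := fun f =>
      ∑ i : Fin m, Real.log (k (f i.castSucc) (f i.succ) * π (f i.castSucc)
        / (k (f i.succ) (f i.castSucc) * π (f i.succ)))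
    ∑ f ∈ univ.filter (fun f : Fin (m + 1) → S =>
        ∀ i : Fin m, f i.succ ≠ f i.castSucc),
      PF f * Real.exp (-(Sig f)) = 1 := by
  intro lam PF Sig
  have hlam : ∀ j, 0 < lam j := by
    intro j
    obtain ⟨i, hi⟩ := Fintype.exists_ne_of_one_lt_card hS j
    exact Finset.sum_pos
      (fun i hi => hk j i (Ne.symm (Finset.ne_of_mem_erase hi)))
      ⟨i, Finset.mem_erase.mpr ⟨hi, Finset.mem_univ i⟩⟩
  have key : ∀ f : Fin (m + 1) → S, (∀ i : Fin m, f i.succ ≠ f i.castSucc) →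
      PF f * Real.exp (-(Sig f))
        = π (f (Fin.last m)) * ∏ i : Fin m,
            k (f i.succ) (f i.castSucc) / lam (f i.castSucc) := by
    intro f hcond
    have hr : ∀ i : Fin m, 0 < k (f i.castSucc) (f i.succ) * π (f i.castSucc)
        / (k (f i.succ) (f i.castSucc) * π (f i.succ)) := fun i =>
      div_pos (mul_pos (hk _ _ (Ne.symm (hcond i))) (hπ _))
        (mul_pos (hk _ _ (hcond i)) (hπ _))
    have hexp : Real.exp (-(Sig f)) = ∏ i : Fin m,
        (k (f i.castSucc) (f i.succ) * π (f i.castSucc)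
          / (k (f i.succ) (f i.castSucc) * π (f i.succ)))⁻¹ := by
      show Real.exp (-(∑ i : Fin m, _)) = _
      rw [← Finset.sum_neg_distrib, Real.exp_sum]
      exact Finset.prod_congr rfl (fun i _ => by
        rw [Real.exp_neg, Real.exp_log (hr i)])
    have hfac : ∀ i : Fin m,
        (k (f i.castSucc) (f i.succ) / lam (f i.castSucc)) *
          (k (f i.castSucc) (f i.succ) * π (f i.castSucc)
            / (k (f i.succ) (f i.castSucc) * π (f i.succ)))⁻¹
        = (k (f i.succ) (f i.castSucc) / lam (f i.castSucc))
            * (π (f i.succ) / π (f i.castSucc)) := by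
      intro i
      have h1 := (hk _ _ (Ne.symm (hcond i))).ne'
      have h2 := (hk _ _ (hcond i)).ne'
      have h3 := (hπ (f i.castSucc)).ne'
      have h4 := (hπ (f i.succ)).ne'
      have h5 := (hlam (f i.castSucc)).ne'
      field_simp
    have htele : ∏ i : Fin m, π (f i.succ) / π (f i.castSucc)
        = π (f (Fin.last m)) / π (f 0) :=
      tele_fin m (fun i => π (f i)) (fun i => (hπ (f i)).ne')
    rw [hexp]
    show π (f 0) * (∏ i : Fin m, _) * _ = _
    rw [mul_assoc, ← Finset.prod_mul_distrib,
      Finset.prod_congr rfl (fun i _ => hfac i), Finset.prod_mul_distrib, htele]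
    have h0 := (hπ (f 0)).ne'
    rw [show π (f 0) * ((∏ i : Fin m, k (f i.succ) (f i.castSucc) / lam (f i.castSucc))
        * (π (f (Fin.last m)) / π (f 0)))
      = (π (f (Fin.last m)) / π (f 0) * π (f 0))
        * ∏ i : Fin m, k (f i.succ) (f i.castSucc) / lam (f i.castSucc) from by ring,
      div_mul_cancel₀ _ h0]
  rw [Finset.sum_filter]
  rw [Finset.sum_congr rfl (fun f _ => by
    by_cases hc : ∀ i : Fin m, f i.succ ≠ f i.castSucc
    · rw [if_pos hc, if_pos hc, key f hc]
    · rw [if_neg hc, if_neg hc]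
    : ∀ f ∈ univ, _ = if ∀ i : Fin m, f i.succ ≠ f i.castSucc then
        π (f (Fin.last m)) * ∏ i : Fin m,
          k (f i.succ) (f i.castSucc) / lam (f i.castSucc) else 0)]
  exact aux_sum k π hπ1 lam (fun j => (hlam j).ne') hstat m
end

section
/- Detailed fluctuation theorem for the embedded chain: let S be a finite set with at least two elements, k : S × S → ℝ strictly positive on distinct pairs, and π : S → ℝ strictly positive, normalized, and stationary for k; let k†(i,j) = (π(j)/π(i))·k(j,i) be the dual rates. For trajectories ω = (j₀, …, j_m) with consecutive states distinct, define P_F(ω) = π(j₀)·∏ k(j_i,j_{i+1})/λ(j_i), P†(ω) = π(j₀)·∏ k†(j_i,j_{i+1})/λ†(j_i), and Σ(ω) = ∑ log( k(j_i,j_{i+1})·π(j_i) / ( k(j_{i+1},j_i)·π(j_{i+1}) ) ), where λ(j) = ∑_{i≠j} k(j,i) and λ†(j) = ∑_{i≠j} k†(j,i). Then for every real number s, ∑_{ω : Σ(ω) = s} P_F(ω) = e^s · ∑_{ω : Σ(ω) = s} P†(ω); equivalently, since the dual entropy production of ω is −Σ(ω), the probability of observing entropy production s under the forward dynamics equals e^s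 times the probability of observing −s for the dual entropy production under the dual dynamics. -/
open Finset in
open scoped Classical in
/-- Detailed fluctuation theorem for the embedded chain:
for every value `s` of the entropy production, the total forward probability of
trajectories with `Σ(ω) = s` equals `e^s` times the total dual probability of those
trajectories; since the dual entropy production of `ω` is `−Σ(ω)`, this says the
probability of entropy production `s` under the forward dynamics is `e^s` times the
probability of `−s` for the dual entropy production under the dual dynamics. -/
theorem detailed_fluctuation_theorem_embedded_chain
    {S : Type} [Fintype S] [DecidableEq S] (hS : 1 < Fintype.card S)
    (k : S → S → ℝ) (hk : ∀ i j, i ≠ j → 0 < k i j)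
    (π : S → ℝ) (hπ : ∀ j, 0 < π j) (hπ1 : ∑ j, π j = 1)
    (hstat : ∀ j, ∑ i ∈ univ.erase j, π i * k i j
      = π j * ∑ i ∈ univ.erase j, k j i)
    (m : ℕ) (hm : 1 ≤ m) (s : ℝ) :
    let lam : S → ℝ := fun j => ∑ i ∈ univ.erase j, k j i
    let kd : S → S → ℝ := fun i j => (π j / π i) * k j i
    let lamd : S → ℝ := fun j => ∑ i ∈ univ.erase j, kd j i
    let PF : (Fin (m + 1) → S) → ℝ := fun f =>
      π (f 0) * ∏ i : Fin m, k (f i.castSucc) (f i.succ) / lam (f i.castSucc)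
    let PD : (Fin (m + 1) → S) → ℝ := fun f =>
      π (f 0) * ∏ i : Fin m, kd (f i.castSucc) (f i.succ) / lamd (f i.castSucc)
    let Sig : (Fin (m + 1) → S) → ℝ := fun f =>
      ∑ i : Fin m, Real.log (k (f i.castSucc) (f i.succ) * π (f i.castSucc)
        / (k (f i.succ) (f i.castSucc) * π (f i.succ)))
    let T : Finset (Fin (m + 1) → S) :=
      univ.filter (fun f => ∀ i : Fin m, f i.succ ≠ f i.castSucc)
    ∑ f ∈ T.filter (fun f => Sig f = s), PF f
      = Real.exp s * ∑ f ∈ T.filter (fun f => Sig f = s), PD f := by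
  intro lam kd lamd PF PD Sig T
  have hlamd : ∀ j, lamd j = lam j := by
    intro j
    have h1 : lamd j = (π j)⁻¹ * ∑ i ∈ univ.erase j, π i * k i j := by
      rw [Finset.mul_sum]
      apply Finset.sum_congr rfl
      intro i hi
      simp only [kd]
      field_simp
    rw [h1, hstat j, ← mul_assoc, inv_mul_cancel₀ (hπ j).ne', one_mul]
  rw [Finset.mul_sum]
  apply Finset.sum_congr rfl
  intro f hf
  simp only [Finset.mem_filter, Finset.mem_univ, true_and, T] at hf
  obtain ⟨hfT, hfs⟩ := hf
  have hlam : ∀ j : S, 0 < lam j := by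
    intro j
    apply Finset.sum_pos
    · intro i hi
      exact hk j i (Finset.ne_of_mem_erase hi).symm
    · obtain ⟨a, b, hab⟩ := Fintype.exists_pair_of_one_lt_card hS
      rcases eq_or_ne a j with rfl | h
      · exact ⟨b, Finset.mem_erase.mpr ⟨(Ne.symm hab), Finset.mem_univ _⟩⟩
      · exact ⟨a, Finset.mem_erase.mpr ⟨h, Finset.mem_univ _⟩⟩
  have hr : ∀ i : Fin m, 0 < k (f i.castSucc) (f i.succ) * π (f i.castSucc)
      / (k (f i.succ) (f i.castSucc) * π (f i.succ)) := by
    intro i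
    have h1 := hk (f i.castSucc) (f i.succ) (Ne.symm (hfT i))
    have h2 := hk (f i.succ) (f i.castSucc) (hfT i)
    exact div_pos (mul_pos h1 (hπ _)) (mul_pos h2 (hπ _))
  have hexp : Real.exp s = ∏ i : Fin m, (k (f i.castSucc) (f i.succ) * π (f i.castSucc)
      / (k (f i.succ) (f i.castSucc) * π (f i.succ))) := by
    rw [← hfs]
    simp only [Sig]
    rw [Real.exp_sum]
    exact Finset.prod_congr rfl fun i _ => Real.exp_log (hr i)
  simp only [PF, PD, hexp]
  rw [mul_comm _ (π (f 0) * _), mul_assoc, ← Finset.prod_mul_distrib]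
  congr 1
  apply Finset.prod_congr rfl
  intro i _
  simp only [kd, hlamd]
  have h1 := (hk (f i.castSucc) (f i.succ) (Ne.symm (hfT i))).ne'
  have h2 := (hk (f i.succ) (f i.castSucc) (hfT i)).ne'
  have h3 := (hπ (f i.castSucc)).ne'
  have h4 := (hπ (f i.succ)).ne'
  have h5 := (hlam (f i.castSucc)).ne'
  field_simp
end

section
/- Second law for the embedded chain: let S be a finite set with at least two elements, k : S × S → ℝ strictly positive on distinct pairs, and π : S → ℝ a strictly positive, normalized stationary distribution for k. Fix m ≥ 1, and for trajectories ω = (j₀,…,j_m) with consecutive states distinct define P_F(ω) = π(j₀)·∏ k(j_i,j_{i+1})/λ(j_i), with λ(j) = ∑_{i≠j} k(j,i), and Σ(ω) = ∑ log( k(j_i,j_{i+1})·π(j_i) / ( k(j_{i+1},j_i)·π(j_{i+1}) ) ). Then the mean entropy production is nonnegative: ∑_ω P_F(ω)·Σ(ω) ≥ 0. -/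
/-!
Write `P_R(ω) = π(j_m) ∏ k(j_{i+1}, j_i) / λ(j_i)` for the weight of the reversed trajectory.
The escape rates cancel and the factors of `π` telescope, so `Σ(ω) = log (P_F(ω) / P_R(ω))`.
Over non-lazy trajectories both `P_F` and `P_R` have total mass `∑ π`: summing out the last
state, the first uses that the rows of the embedded chain sum to `1`, the second that
stationarity makes `π` harmonic for the kernel `k(i, j) / λ(j)`. The mean entropy production
`∑ P_F log (P_F / P_R)` is therefore nonnegative by Gibbs' inequality.
-/

open Finset

section Paths

variable {S : Type*}

def pathProd {M : Type*} [CommMonoid M] (w : S → S → M) {m : ℕ} (f : Fin (m + 1) → S) : M :=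
  ∏ i : Fin m, w (f i.castSucc) (f i.succ)

theorem pathProd_snoc {M : Type*} [CommMonoid M] (w : S → S → M) {m : ℕ} (f : Fin (m + 1) → S)
    (x : S) :
    pathProd w (Fin.snoc f x : Fin (m + 2) → S) = pathProd w f * w (f (Fin.last m)) x := by
  simp [pathProd, Fin.prod_univ_castSucc, Fin.succ_castSucc, -Fin.castSucc_succ]

variable [Fintype S] [DecidableEq S]

variable (S) in
def nonLazyPaths (m : ℕ) : Finset (Fin (m + 1) → S) :=
  univ.filter fun f => ∀ i : Fin m, f i.succ ≠ f i.castSucc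

theorem mem_nonLazyPaths {m : ℕ} {f : Fin (m + 1) → S} :
    f ∈ nonLazyPaths S m ↔ ∀ i : Fin m, f i.succ ≠ f i.castSucc := by
  simp [nonLazyPaths]

theorem snoc_mem_nonLazyPaths {m : ℕ} {f : Fin (m + 1) → S} {x : S} :
    (Fin.snoc f x : Fin (m + 2) → S) ∈ nonLazyPaths S (m + 1) ↔
      f ∈ nonLazyPaths S m ∧ x ≠ f (Fin.last m) := by
  simp [mem_nonLazyPaths, Fin.forall_fin_succ', Fin.succ_castSucc, -Fin.castSucc_succ]

theorem sum_nonLazyPaths_succ {M : Type*} [AddCommMonoid M] {m : ℕ}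
    (Φ : (Fin (m + 2) → S) → M) :
    ∑ f ∈ nonLazyPaths S (m + 1), Φ f =
      ∑ f ∈ nonLazyPaths S m, ∑ x ∈ univ.erase (f (Fin.last m)), Φ (Fin.snoc f x) := by
  rw [← Fintype.sum_ite_mem (nonLazyPaths S _), ← Fintype.sum_ite_mem (nonLazyPaths S m),
    ← (Fin.snocEquiv fun _ => S).sum_comp, Fintype.sum_prod_type, sum_comm]
  refine sum_congr rfl fun f _ => ?_
  simp only [Fin.snocEquiv, Equiv.coe_fn_mk, snoc_mem_nonLazyPaths, ← filter_ne', sum_filter]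
  by_cases hf : f ∈ nonLazyPaths S m <;> simp [hf]

theorem sum_nonLazyPaths_pathProd_of_harmonic {R : Type*} [CommSemiring R] {w : S → S → R}
    {g : S → R} (hg : ∀ j, ∑ i ∈ univ.erase j, w j i * g i = g j) (μ : S → R) (m : ℕ) :
    ∑ f ∈ nonLazyPaths S m, μ (f 0) * pathProd w f * g (f (Fin.last m)) = ∑ j, μ j * g j := by
  induction m with
  | zero =>
    rw [show nonLazyPaths S 0 = univ from filter_true_of_mem fun _ _ i => i.elim0]
    exact Fintype.sum_equiv (Equiv.funUnique (Fin 1) S) _ _ fun f => by simp [pathProd]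
  | succ m ih =>
    rw [sum_nonLazyPaths_succ, ← ih]
    refine sum_congr rfl fun f _ => ?_
    have hstart : ∀ x, (Fin.snoc f x : Fin (m + 2) → S) 0 = f 0 := fun x =>
      Fin.snoc_castSucc (α := fun _ => S) x f 0
    simp only [pathProd_snoc, Fin.snoc_last, hstart, mul_assoc]
    rw [← mul_sum, ← mul_sum, hg]

theorem sum_nonLazyPaths_pathProd_of_sum_eq_one {R : Type*} [CommSemiring R] {w : S → S → R}
    (hw : ∀ j, ∑ i ∈ univ.erase j, w j i = 1) (μ : S → R) (m : ℕ) :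
    ∑ f ∈ nonLazyPaths S m, μ (f 0) * pathProd w f = ∑ j, μ j := by
  simpa using sum_nonLazyPaths_pathProd_of_harmonic (g := fun _ => 1) (by simpa using hw) μ m

theorem sum_nonLazyPaths_pathProd_mul_of_harmonic {R : Type*} [CommSemiring R] {w : S → S → R}
    {g : S → R} (hg : ∀ j, ∑ i ∈ univ.erase j, w j i * g i = g j) (m : ℕ) :
    ∑ f ∈ nonLazyPaths S m, pathProd w f * g (f (Fin.last m)) = ∑ j, g j := by
  simpa using sum_nonLazyPaths_pathProd_of_harmonic hg (fun _ => 1) m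

theorem pathProd_pos {R : Type*} [CommSemiring R] [PartialOrder R] [IsStrictOrderedRing R]
    {w : S → S → R} (hw : ∀ a b, a ≠ b → 0 < w a b) {m : ℕ} {f : Fin (m + 1) → S}
    (hf : f ∈ nonLazyPaths S m) : 0 < pathProd w f :=
  prod_pos fun i _ => hw _ _ (mem_nonLazyPaths.mp hf i).symm

end Paths

theorem Fin.prod_mul_div_mul_telescope {K : Type*} [Field K] {m : ℕ} (u v : Fin m → K)
    (F : Fin (m + 1) → K) (hv : ∀ i, v i ≠ 0) (hF : ∀ i, F i ≠ 0) :
    ∏ i, u i * F i.castSucc / (v i * F i.succ) =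
      F 0 * (∏ i, u i) / ((∏ i, v i) * F (Fin.last m)) := by
  have htele : (∏ i : Fin m, F i.castSucc) * F (Fin.last m) = F 0 * ∏ i : Fin m, F i.succ := by
    rw [← Fin.prod_univ_castSucc, Fin.prod_univ_succ]
  have hv' : ∏ i, v i ≠ 0 := prod_ne_zero_iff.mpr fun i _ => hv i
  have hF' : ∏ i : Fin m, F i.succ ≠ 0 := prod_ne_zero_iff.mpr fun i _ => hF _
  rw [prod_div_distrib, prod_mul_distrib, prod_mul_distrib]
  field_simp [hF (Fin.last m)]
  linear_combination (∏ i, u i) * htele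

theorem sub_le_mul_log_div {p q : ℝ} (hp : 0 < p) (hq : 0 < q) : p - q ≤ p * Real.log (p / q) := by
  have := Real.one_sub_inv_le_log_of_pos (div_pos hp hq)
  rw [inv_div] at this
  calc p - q = p * (1 - q / p) := by field_simp
    _ ≤ p * Real.log (p / q) := mul_le_mul_of_nonneg_left this hp.le

theorem sum_mul_log_div_nonneg {ι : Type*} {s : Finset ι} {p q : ι → ℝ}
    (hp : ∀ i ∈ s, 0 < p i) (hq : ∀ i ∈ s, 0 < q i) (hpq : ∑ i ∈ s, q i ≤ ∑ i ∈ s, p i) :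
    0 ≤ ∑ i ∈ s, p i * Real.log (p i / q i) :=
  calc 0 ≤ ∑ i ∈ s, (p i - q i) := by rw [sum_sub_distrib]; linarith
    _ ≤ _ := sum_le_sum fun i hi => sub_le_mul_log_div (hp i hi) (hq i hi)

theorem sum_log_detailed_ratio_eq_log_div {S : Type*} [Fintype S] [DecidableEq S]
    {k : S → S → ℝ} {lam π : S → ℝ} (hk : ∀ a b, a ≠ b → k a b ≠ 0) (hlam : ∀ a, lam a ≠ 0)
    (hπ : ∀ a, π a ≠ 0) {m : ℕ} {f : Fin (m + 1) → S} (hf : f ∈ nonLazyPaths S m) :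
    ∑ i : Fin m, Real.log (k (f i.castSucc) (f i.succ) * π (f i.castSucc)
        / (k (f i.succ) (f i.castSucc) * π (f i.succ))) =
      Real.log (π (f 0) * pathProd (fun a b => k a b / lam a) f
        / (pathProd (fun a b => k b a / lam a) f * π (f (Fin.last m)))) := by
  have hstep := mem_nonLazyPaths.mp hf
  rw [← Real.log_prod fun i _ => div_ne_zero (mul_ne_zero (hk _ _ (hstep i).symm) (hπ _))
    (mul_ne_zero (hk _ _ (hstep i)) (hπ _))]
  have hratio : ∀ i : Fin m, k (f i.castSucc) (f i.succ) * π (f i.castSucc)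
      / (k (f i.succ) (f i.castSucc) * π (f i.succ)) =
      k (f i.castSucc) (f i.succ) / lam (f i.castSucc) * π (f i.castSucc)
        / (k (f i.succ) (f i.castSucc) / lam (f i.castSucc) * π (f i.succ)) := fun i => by
    field_simp [hlam (f i.castSucc)]
  simp only [hratio]
  exact congrArg Real.log (Fin.prod_mul_div_mul_telescope _ _ (fun i => π (f i))
    (fun i => div_ne_zero (hk _ _ (hstep i)) (hlam _)) fun i => hπ _)

section EmbeddedChain

variable {S : Type*} [Fintype S] [DecidableEq S] {k : S → S → ℝ} {j : S}

def escapeRate (k : S → S → ℝ) (j : S) : ℝ :=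
  ∑ i ∈ univ.erase j, k j i

theorem escapeRate_pos (hS : 1 < Fintype.card S) (hk : ∀ i j, i ≠ j → 0 < k i j) (j : S) :
    0 < escapeRate k j :=
  sum_pos (fun i hi => hk j i (ne_of_mem_erase hi).symm)
    (by rw [← card_pos, card_erase_of_mem (mem_univ j), card_univ]; omega)

theorem sum_div_escapeRate (hj : escapeRate k j ≠ 0) :
    ∑ i ∈ univ.erase j, k j i / escapeRate k j = 1 := by
  rw [← sum_div]
  exact div_self hj

theorem sum_reversed_div_escapeRate_mul {π : S → ℝ}
    (hstat : ∑ i ∈ univ.erase j, π i * k i j = π j * escapeRate k j) (hj : escapeRate k j ≠ 0) :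
    ∑ i ∈ univ.erase j, k i j / escapeRate k j * π i = π j := by
  rw [← mul_div_cancel_right₀ (π j) hj, ← hstat, sum_div]
  exact sum_congr rfl fun i _ => by ring

end EmbeddedChain

open Finset in
theorem second_law_embedded_chain_general
    {S : Type} [Fintype S] [DecidableEq S] (hS : 1 < Fintype.card S)
    (k : S → S → ℝ) (hk : ∀ i j, i ≠ j → 0 < k i j)
    (π : S → ℝ) (hπ : ∀ j, 0 < π j)
    (hstat : ∀ j, ∑ i ∈ univ.erase j, π i * k i j
      = π j * ∑ i ∈ univ.erase j, k j i)
    (m : ℕ) :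
    let lam : S → ℝ := fun j => ∑ i ∈ univ.erase j, k j i
    let PF : (Fin (m + 1) → S) → ℝ := fun f =>
      π (f 0) * ∏ i : Fin m, k (f i.castSucc) (f i.succ) / lam (f i.castSucc)
    let Sig : (Fin (m + 1) → S) → ℝ := fun f =>
      ∑ i : Fin m, Real.log (k (f i.castSucc) (f i.succ) * π (f i.castSucc)
        / (k (f i.succ) (f i.castSucc) * π (f i.succ)))
    0 ≤ ∑ f ∈ univ.filter (fun f : Fin (m + 1) → S =>
        ∀ i : Fin m, f i.succ ≠ f i.castSucc), PF f * Sig f := by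
  intro lam PF Sig
  have hlam : ∀ j, 0 < lam j := escapeRate_pos hS hk
  let PR : (Fin (m + 1) → S) → ℝ := fun f =>
    pathProd (fun a b => k b a / lam a) f * π (f (Fin.last m))
  have hPF : ∑ f ∈ nonLazyPaths S m, PF f = ∑ j, π j :=
    sum_nonLazyPaths_pathProd_of_sum_eq_one (fun j => sum_div_escapeRate (hlam j).ne') π m
  have hPR : ∑ f ∈ nonLazyPaths S m, PR f = ∑ j, π j :=
    sum_nonLazyPaths_pathProd_mul_of_harmonic
      (fun j => sum_reversed_div_escapeRate_mul (hstat j) (hlam j).ne') m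
  have hSig : ∀ f ∈ nonLazyPaths S m, Sig f = Real.log (PF f / PR f) := fun f hf =>
    sum_log_detailed_ratio_eq_log_div (fun a b h => (hk a b h).ne') (fun a => (hlam a).ne')
      (fun a => (hπ a).ne') hf
  change 0 ≤ ∑ f ∈ nonLazyPaths S m, PF f * Sig f
  rw [sum_congr rfl fun f hf => by rw [hSig f hf]]
  exact sum_mul_log_div_nonneg
    (fun f hf => mul_pos (hπ _) (pathProd_pos (fun a b h => div_pos (hk a b h) (hlam a)) hf))
    (fun f hf => mul_pos (pathProd_pos (fun a b h => div_pos (hk b a h.symm) (hlam a)) hf)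
      (hπ _))
    (hPR.trans hPF.symm).le

open Finset in
/-- Second law for the embedded chain: the mean entropy production over
all length-`m` trajectories with consecutive states distinct is nonnegative:
`∑_ω P_F(ω)·Σ(ω) ≥ 0`, where `P_F(ω) = π(j₀) ∏ᵢ k(jᵢ,jᵢ₊₁)/λ(jᵢ)` and
`Σ(ω) = ∑ᵢ log( k(jᵢ,jᵢ₊₁)·π(jᵢ) / ( k(jᵢ₊₁,jᵢ)·π(jᵢ₊₁) ) )`. -/
theorem second_law_embedded_chain
    {S : Type} [Fintype S] [DecidableEq S] (hS : 1 < Fintype.card S)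
    (k : S → S → ℝ) (hk : ∀ i j, i ≠ j → 0 < k i j)
    (π : S → ℝ) (hπ : ∀ j, 0 < π j) (hπ1 : ∑ j, π j = 1)
    (hstat : ∀ j, ∑ i ∈ univ.erase j, π i * k i j
      = π j * ∑ i ∈ univ.erase j, k j i)
    (m : ℕ) (hm : 1 ≤ m) :
    let lam : S → ℝ := fun j => ∑ i ∈ univ.erase j, k j i
    let PF : (Fin (m + 1) → S) → ℝ := fun f =>
      π (f 0) * ∏ i : Fin m, k (f i.castSucc) (f i.succ) / lam (f i.castSucc)
    let Sig : (Fin (m + 1) → S) → ℝ := fun f =>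
      ∑ i : Fin m, Real.log (k (f i.castSucc) (f i.succ) * π (f i.castSucc)
        / (k (f i.succ) (f i.castSucc) * π (f i.succ)))
    0 ≤ ∑ f ∈ univ.filter (fun f : Fin (m + 1) → S =>
        ∀ i : Fin m, f i.succ ≠ f i.castSucc), PF f * Sig f :=
  second_law_embedded_chain_general hS k hk π hπ hstat m
end

section
/- Gallavotti–Cohen spectral symmetry: let S be a finite set, k : S × S → ℝ strictly positive on distinct pairs, a(i,j) = log(k(i,j)/k(j,i)), and let M(λ) be the tilted generator with off-diagonal entries k(i,j)·exp(−λ·a(i,j)) and diagonal entries −∑_{j≠i} k(i,j). Then for every λ ∈ ℝ the matrices M(λ) and M(1−λ) have the same spectrum (the same set of eigenvalues, over ℂ); in particular the characteristic polynomials of M(λ) and M(1−λ) coincide. -/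
open Finset Matrix

lemma charmatrix_transpose' {n R : Type*} [Fintype n] [DecidableEq n] [CommRing R]
    (A : Matrix n n R) : Matrix.charmatrix Aᵀ = (Matrix.charmatrix A)ᵀ := by
  apply Matrix.ext
  intro i j
  rw [Matrix.transpose_apply]
  by_cases h : i = j
  · subst h
    rw [Matrix.charmatrix_apply_eq, Matrix.charmatrix_apply_eq, Matrix.transpose_apply]
  · rw [Matrix.charmatrix_apply_ne _ _ _ h, Matrix.transpose_apply,
      Matrix.charmatrix_apply_ne _ _ _ (Ne.symm h)]

lemma charpoly_transpose' {n R : Type*} [Fintype n] [DecidableEq n] [CommRing R]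
    (A : Matrix n n R) : Aᵀ.charpoly = A.charpoly := by
  rw [Matrix.charpoly, charmatrix_transpose', Matrix.det_transpose, Matrix.charpoly]

lemma spectrum_transpose' {n : Type*} [Fintype n] [DecidableEq n]
    (A : Matrix n n ℂ) : spectrum ℂ Aᵀ = spectrum ℂ A := by
  ext z
  simp only [spectrum.mem_iff, not_iff_not]
  have : algebraMap ℂ (Matrix n n ℂ) z - Aᵀ = (algebraMap ℂ (Matrix n n ℂ) z - A)ᵀ := by
    rw [Matrix.transpose_sub]
    congr 1
    simp [Algebra.algebraMap_eq_smul_one, Matrix.transpose_smul]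
  rw [this, Matrix.isUnit_iff_isUnit_det, Matrix.det_transpose,
    ← Matrix.isUnit_iff_isUnit_det]

open Finset in
/-- Gallavotti–Cohen spectral symmetry: the tilted generators `M(λ)` and
`M(1−λ)` have the same characteristic polynomial, and the same spectrum over `ℂ`. -/
theorem gallavotti_cohen_spectral_symmetry
    {S : Type} [Fintype S] [DecidableEq S]
    (k : S → S → ℝ) (hk : ∀ i j, i ≠ j → 0 < k i j) (lam : ℝ) :
    let a : S → S → ℝ := fun i j => Real.log (k i j / k j i)
    let M : ℝ → Matrix S S ℝ := fun l => Matrix.of fun i j =>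
      if i = j then -(∑ x ∈ univ.erase i, k i x)
      else k i j * Real.exp (-l * a i j)
    (M lam).charpoly = (M (1 - lam)).charpoly ∧
    spectrum ℂ ((M lam).map (Complex.ofReal ·))
      = spectrum ℂ ((M (1 - lam)).map (Complex.ofReal ·)) := by
  intro a M
  have key : M (1 - lam) = (M lam)ᵀ := by
    ext i j
    by_cases h : i = j
    · subst h; simp [M]
    · have hij := hk i j h
      have hji := hk j i (Ne.symm h)
      simp only [M, Matrix.of_apply, Matrix.transpose_apply, if_neg h, if_neg (Ne.symm h)]
      have ha : a j i = -a i j := by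
        simp only [a]
        rw [← Real.log_inv, inv_div]
      have hexp : Real.exp (a i j) = k i j / k j i := by
        exact Real.exp_log (div_pos hij hji)
      rw [ha]
      have h1 : -(1 - lam) * a i j = -a i j + lam * a i j := by ring
      have h2 : -lam * -a i j = lam * a i j := by ring
      rw [h1, h2, Real.exp_add, Real.exp_neg, hexp, ← mul_assoc]
      congr 1
      field_simp
  constructor
  · rw [key, charpoly_transpose']
  · rw [key]
    have : ((M lam)ᵀ.map (Complex.ofReal ·)) = ((M lam).map (Complex.ofReal ·))ᵀ := by
      ext i j; simp
    rw [this, spectrum_transpose']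
end
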